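/- arXiv:0910.3696 — 2 statements merged into one kernel-verified Lean document; each statement's English description precedes it below -/
import Mathlib

section
/- (Hardy's inequality) Let n ≥ 3 and let u ∈ C_c^∞(ℝⁿ) (or u in the Sobolev space H¹(ℝⁿ)). Then ∫_{ℝⁿ} |u(x)|²/|x|² dx ≤ (2/(n−2))² ∫_{ℝⁿ} |∇u(x)|² dx. -/
open MeasureTheory Real Set Metric
open scoped ENNReal

open Measure in
lemma lintegral_polar {E : Type*} [NormedAddCommGroup E] [NormedSpace ℝ E]
    [MeasurableSpace E] [BorelSpace E] [Nontrivial E] [FiniteDimensional ℝ E]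
    (μ : Measure E) [μ.IsAddHaarMeasure] (f : E → ℝ≥0∞) (hf : Measurable f) :
    ∫⁻ x, f x ∂μ = ∫⁻ ω : sphere (0:E) 1,
      (∫⁻ r in Ioi (0:ℝ), ENNReal.ofReal (r ^ (Module.finrank ℝ E - 1)) * f (r • ω.1))
        ∂μ.toSphere := by
  calc
    ∫⁻ x, f x ∂μ = ∫⁻ x : ({0}ᶜ : Set E), f x.1 ∂(μ.comap (↑)) := by
      rw [lintegral_subtype_comap (measurableSet_singleton _).compl,
        restrict_compl_singleton]
    _ = ∫⁻ p : sphere (0:E) 1 × Ioi (0:ℝ), f (p.2.1 • p.1.1)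
          ∂(μ.toSphere.prod (volumeIoiPow (Module.finrank ℝ E - 1))) := by
      rw [← μ.measurePreserving_homeomorphUnitSphereProd.lintegral_comp_emb
        (Homeomorph.measurableEmbedding _) (fun p => f (p.2.1 • p.1.1))]
      refine lintegral_congr fun x => ?_
      congr 1
      have := homeomorphUnitSphereProd_symm_apply_coe E (homeomorphUnitSphereProd E x)
      rw [Homeomorph.symm_apply_apply] at this
      exact this
    _ = ∫⁻ ω : sphere (0:E) 1, ∫⁻ r : Ioi (0:ℝ), f (r.1 • ω.1)
          ∂(volumeIoiPow (Module.finrank ℝ E - 1)) ∂μ.toSphere := by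
      refine lintegral_prod _ ?_
      have : Measurable fun p : sphere (0:E) 1 × Ioi (0:ℝ) => p.2.1 • p.1.1 :=
        (continuous_subtype_val.comp continuous_snd).smul
          (continuous_subtype_val.comp continuous_fst) |>.measurable
      exact (hf.comp this).aemeasurable
    _ = _ := by
      refine lintegral_congr fun ω => ?_
      rw [volumeIoiPow, lintegral_withDensity_eq_lintegral_mul _
        (g := fun r : Ioi (0:ℝ) => f (r.1 • ω.1))
        ((measurable_subtype_coe.pow_const _).ennreal_ofReal)
        (hf.comp (measurable_subtype_coe.smul_const _))]
      rw [← lintegral_subtype_comap measurableSet_Ioi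
        (fun r : ℝ => ENNReal.ofReal (r ^ (Module.finrank ℝ E - 1)) * f (r • ω.1))]
      simp [Pi.mul_apply]

lemma hardy_1d (n : ℕ) (hn : 3 ≤ n) (g g' : ℝ → ℝ)
    (hg : ∀ r, HasDerivAt g (g' r) r) (hg'c : Continuous g')
    (hcg : HasCompactSupport g) :
    ∫ r in Ioi (0:ℝ), r ^ (n-3) * g r ^ 2 ≤
      (2 / ((n:ℝ) - 2)) ^ 2 * ∫ r in Ioi (0:ℝ), r ^ (n-1) * g' r ^ 2 := by
  have hgc : Continuous g := continuous_iff_continuousAt.2 fun r => (hg r).continuousAt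
  have hcg' : HasCompactSupport g' := by
    have : g' = deriv g := funext fun r => ((hg r).deriv).symm
    rw [this]; exact hcg.deriv
  have hn' : (3:ℝ) ≤ (n:ℝ) := by exact_mod_cast hn
  set c : ℝ := (n:ℝ) - 2 with hcdef
  have hcpos : 0 < c := by simp only [hcdef]; linarith
  set f₁ : ℝ → ℝ := fun r => r ^ (n-3) * g r ^ 2 with hf₁
  set f₂ : ℝ → ℝ := fun r => r ^ (n-2) * (2 * g r * g' r) with hf₂
  set f₃ : ℝ → ℝ := fun r => r ^ (n-1) * g' r ^ 2 with hf₃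
  have hsq : HasCompactSupport fun r => g r ^ 2 :=
    hcg.comp_left (g := fun y : ℝ => y ^ 2) (by norm_num)
  have hint₁ : IntegrableOn f₁ (Ioi (0:ℝ)) := by
    refine (Continuous.integrable_of_hasCompactSupport (by fun_prop) ?_).integrableOn
    exact hsq.mul_left
  have hint₂ : IntegrableOn f₂ (Ioi (0:ℝ)) := by
    refine (Continuous.integrable_of_hasCompactSupport (by fun_prop) ?_).integrableOn
    exact (hcg'.mul_left (f := fun r => 2 * g r)).mul_left
  have hint₃ : IntegrableOn f₃ (Ioi (0:ℝ)) := by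
    refine (Continuous.integrable_of_hasCompactSupport (by fun_prop) ?_).integrableOn
    exact (hcg'.comp_left (g := fun y : ℝ => y ^ 2) (by norm_num)).mul_left
  set A := ∫ r in Ioi (0:ℝ), f₁ r with hA
  set B := ∫ r in Ioi (0:ℝ), f₃ r with hB
  set φ : ℝ → ℝ := fun r => r ^ (n-2) * g r ^ 2 with hφdef
  have hφc : HasCompactSupport φ := hsq.mul_left
  have hD : ∀ r, HasDerivAt φ (c * f₁ r + f₂ r) r := by
    intro r
    have h1 := (hasDerivAt_pow (n-2) r).mul ((hg r).pow 2)
    refine h1.congr_deriv ?_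
    have e1 : n - 2 - 1 = n - 3 := by omega
    have e2 : ((n-2 : ℕ) : ℝ) = c := by
      simp only [hcdef]; push_cast [Nat.cast_sub (by omega : 2 ≤ n)]; ring
    rw [e1, e2]
    simp only [hf₁, hf₂, Pi.pow_apply]
    ring
  have hDint : IntegrableOn (fun r => c * f₁ r + f₂ r) (Ioi (0:ℝ)) :=
    (hint₁.const_mul c).add hint₂
  have htend : Filter.Tendsto φ Filter.atTop (nhds 0) := by
    obtain ⟨R, hR⟩ := hφc.isCompact.isBounded.subset_closedBall 0
    refine Filter.Tendsto.congr' ?_ tendsto_const_nhds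
    filter_upwards [Filter.eventually_gt_atTop R] with r hr
    by_contra hne
    have : r ∈ tsupport φ := subset_tsupport φ (by simpa using Ne.symm hne)
    have := hR this
    simp only [Metric.mem_closedBall, dist_zero_right, Real.norm_eq_abs] at this
    have : r ≤ R := (abs_le.1 this).2
    linarith
  have hzero : ∫ r in Ioi (0:ℝ), (c * f₁ r + f₂ r) = 0 := by
    rw [integral_Ioi_of_hasDerivAt_of_tendsto' (fun x _ => hD x) hDint htend]
    simp only [hφdef]
    rw [zero_pow (by omega : n - 2 ≠ 0)]
    ring
  have hkey : c * A = - ∫ r in Ioi (0:ℝ), f₂ r := by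
    have h := integral_add (hint₁.const_mul c) hint₂
    rw [h, integral_const_mul] at hzero
    rw [hA]; linarith
  have hpt : ∀ r ∈ Ioi (0:ℝ), -f₂ r ≤ (c/2) * f₁ r + (2/c) * f₃ r := by
    intro r hr
    have hr0 : (0:ℝ) < r := hr
    set s := Real.sqrt (r ^ (n-3)) with hs
    set t := Real.sqrt (r ^ (n-1)) with ht
    have hs2 : s ^ 2 = r ^ (n-3) := Real.sq_sqrt (pow_nonneg hr0.le _)
    have ht2 : t ^ 2 = r ^ (n-1) := Real.sq_sqrt (pow_nonneg hr0.le _)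
    have hst : s * t = r ^ (n-2) := by
      rw [hs, ht, ← Real.sqrt_mul (pow_nonneg hr0.le _), ← pow_add]
      have : n - 3 + (n - 1) = (n-2) * 2 := by omega
      rw [this, pow_mul]
      exact Real.sqrt_sq (pow_nonneg hr0.le _)
    simp only [hf₁, hf₂, hf₃]
    rw [← hs2, ← ht2, ← hst]
    have key : 0 ≤ c^2*(s*g r)^2 + 4*(t*g' r)^2 + 4*(c*(s*t*(g r*g' r))) := by
      nlinarith [sq_nonneg (c * (s * g r) + 2 * (t * g' r))]
    have h2c : (0:ℝ) < 2*c := by linarith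
    have hgoal : c / 2 * (s ^ 2 * g r ^ 2) + 2 / c * (t ^ 2 * g' r ^ 2)
        + s * t * (2 * g r * g' r)
        = (c^2*(s*g r)^2 + 4*(t*g' r)^2 + 4*(c*(s*t*(g r*g' r)))) / (2*c) := by
      field_simp
      ring
    linarith [div_nonneg key h2c.le]
  have hmono : - ∫ r in Ioi (0:ℝ), f₂ r ≤ (c/2) * A + (2/c) * B := by
    rw [← integral_neg]
    have := setIntegral_mono_on hint₂.neg
      ((hint₁.const_mul (c/2)).add (hint₃.const_mul (2/c))) measurableSet_Ioi hpt
    simp only [Pi.neg_apply, Pi.add_apply] at this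
    calc ∫ r in Ioi (0:ℝ), -f₂ r ≤ ∫ r in Ioi (0:ℝ), ((c/2) * f₁ r + (2/c) * f₃ r) := this
      _ = (c/2) * A + (2/c) * B := by
        rw [integral_add (hint₁.const_mul (c/2)) (hint₃.const_mul (2/c)),
          integral_const_mul, integral_const_mul]
  have hfin : c * A ≤ (c/2) * A + (2/c) * B := hkey ▸ hmono
  have hAB : (c/2) * A ≤ (2/c) * B := by linarith
  have : A ≤ (2/c)^2 * B := by
    have h4 := mul_le_mul_of_nonneg_left hAB (le_of_lt (show (0:ℝ) < 2/c by positivity))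
    calc A = (2/c) * ((c/2) * A) := by field_simp
      _ ≤ (2/c) * ((2/c) * B) := h4
      _ = (2/c)^2 * B := by ring
  simpa [hcdef] using this

lemma ray_support {E F : Type*} [NormedAddCommGroup E] [NormedSpace ℝ E]
    [NormedAddCommGroup F] (f : E → F) (hf : HasCompactSupport f)
    (ω : E) (hω : ‖ω‖ = 1) : HasCompactSupport fun r : ℝ => f (r • ω) := by
  obtain ⟨R, hR⟩ := hf.isCompact.isBounded.subset_closedBall 0
  refine HasCompactSupport.intro (isCompact_closedBall (0:ℝ) R) fun r hr => ?_
  have hnm : r • ω ∉ tsupport f := by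
    intro hmem
    have h1 := hR hmem
    rw [mem_closedBall, dist_zero_right, norm_smul, hω, mul_one, Real.norm_eq_abs] at h1
    exact hr (by simpa [mem_closedBall, dist_zero_right, Real.norm_eq_abs] using h1)
  exact image_eq_zero_of_notMem_tsupport hnm

set_option maxHeartbeats 1000000 in
theorem hardy_inequality (n : ℕ) (hn : 3 ≤ n)
    (u : EuclideanSpace ℝ (Fin n) → ℝ)
    (hu : ContDiff ℝ (⊤ : ℕ∞) u) (hc : HasCompactSupport u) :
    ∫ x : EuclideanSpace ℝ (Fin n), (u x) ^ 2 / ‖x‖ ^ 2 ≤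
      (2 / ((n : ℝ) - 2)) ^ 2 * ∫ x : EuclideanSpace ℝ (Fin n), ‖fderiv ℝ u x‖ ^ 2 := by
  haveI : Nonempty (Fin n) := ⟨⟨0, by omega⟩⟩
  haveI : Nontrivial (EuclideanSpace ℝ (Fin n)) := by infer_instance
  set C : ℝ := (2 / ((n:ℝ) - 2)) ^ 2 with hCdef
  have hC0 : (0:ℝ) ≤ C := sq_nonneg _
  have hfr : Module.finrank ℝ (EuclideanSpace ℝ (Fin n)) = n := finrank_euclideanSpace_fin
  have hudiff : Differentiable ℝ u := hu.differentiable (by simp)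
  have hucont : Continuous u := hu.continuous
  have hfc : Continuous (fderiv ℝ u) := hu.continuous_fderiv (by simp)
  -- per-ray data
  have hω1 : ∀ ω : sphere (0 : EuclideanSpace ℝ (Fin n)) 1,
      ‖(ω : EuclideanSpace ℝ (Fin n))‖ = 1 := fun ω => mem_sphere_zero_iff_norm.1 ω.2
  set F : sphere (0 : EuclideanSpace ℝ (Fin n)) 1 → ℝ :=
    fun ω => ∫ r in Ioi (0:ℝ), r ^ (n-3) * (u (r • (ω : EuclideanSpace ℝ (Fin n))))^2 with hFdef
  set H : sphere (0 : EuclideanSpace ℝ (Fin n)) 1 → ℝ :=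
    fun ω => ∫ r in Ioi (0:ℝ),
      r ^ (n-1) * ‖fderiv ℝ u (r • (ω : EuclideanSpace ℝ (Fin n)))‖^2 with hHdef
  have hint1 : ∀ ω : sphere (0 : EuclideanSpace ℝ (Fin n)) 1,
      IntegrableOn (fun r : ℝ => r ^ (n-3) * (u (r • (ω : EuclideanSpace ℝ (Fin n))))^2)
        (Ioi (0:ℝ)) := by
    intro ω
    refine (Continuous.integrable_of_hasCompactSupport
      ((continuous_pow _).mul ((hucont.comp (continuous_id.smul continuous_const)).pow 2))
      ?_).integrableOn
    have h0 := (ray_support u hc (ω : EuclideanSpace ℝ (Fin n)) (hω1 ω)).comp_left (g := fun y : ℝ => y^2) (by norm_num)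
    exact HasCompactSupport.mul_left (f := fun r : ℝ => r ^ (n-3)) h0
  have hint2 : ∀ ω : sphere (0 : EuclideanSpace ℝ (Fin n)) 1,
      IntegrableOn (fun r : ℝ =>
        r ^ (n-1) * ‖fderiv ℝ u (r • (ω : EuclideanSpace ℝ (Fin n)))‖^2) (Ioi (0:ℝ)) := by
    intro ω
    refine (Continuous.integrable_of_hasCompactSupport
      ((continuous_pow _).mul (((hfc.comp (continuous_id.smul continuous_const)).norm).pow 2))
      ?_).integrableOn
    have h0 := (ray_support _ (hc.fderiv (𝕜 := ℝ)) (ω : EuclideanSpace ℝ (Fin n)) (hω1 ω)).comp_left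
      (g := fun L : EuclideanSpace ℝ (Fin n) →L[ℝ] ℝ => ‖L‖^2) (by simp)
    exact HasCompactSupport.mul_left (f := fun r : ℝ => r ^ (n-1)) h0
  have hray : ∀ ω : sphere (0 : EuclideanSpace ℝ (Fin n)) 1, F ω ≤ C * H ω := by
    intro ω
    set w : EuclideanSpace ℝ (Fin n) := (ω : EuclideanSpace ℝ (Fin n)) with hwdef
    have hωn : ‖w‖ = 1 := hω1 ω
    set g : ℝ → ℝ := fun r => u (r • w) with hgdef
    set g' : ℝ → ℝ := fun r => fderiv ℝ u (r • w) w with hg'def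
    have hder : ∀ r, HasDerivAt g (g' r) r := by
      intro r
      have h1 := ((hudiff (r • w)).hasFDerivAt).comp_hasDerivAt r
        ((hasDerivAt_id r).smul_const w)
      rw [one_smul] at h1
      exact h1
    have hg'cont : Continuous g' :=
      (hfc.comp (continuous_id.smul continuous_const)).clm_apply continuous_const
    have hgcs : HasCompactSupport g := ray_support u hc w hωn
    have h1d := hardy_1d n hn g g' hder hg'cont hgcs
    refine h1d.trans (mul_le_mul_of_nonneg_left ?_ hC0)
    have hDcs : HasCompactSupport (fun r : ℝ => fderiv ℝ u (r • w)) :=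
      ray_support _ (hc.fderiv (𝕜 := ℝ)) w hωn
    have hmid : IntegrableOn (fun r : ℝ => r ^ (n-1) * g' r ^ 2) (Ioi (0:ℝ)) := by
      refine (Continuous.integrable_of_hasCompactSupport
        ((continuous_pow _).mul (hg'cont.pow 2)) ?_).integrableOn
      have h0 := hDcs.comp_left
        (g := fun L : EuclideanSpace ℝ (Fin n) →L[ℝ] ℝ => (L w)^2) (by simp)
      exact HasCompactSupport.mul_left (f := fun r : ℝ => r ^ (n-1)) h0
    refine setIntegral_mono_on hmid (hint2 ω) measurableSet_Ioi fun r hr => ?_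
    have hb := (fderiv ℝ u (r • w)).le_opNorm w
    rw [hωn, mul_one] at hb
    have hsqle : g' r ^ 2 ≤ ‖fderiv ℝ u (r • w)‖ ^ 2 := by
      have habs : |g' r| ≤ ‖fderiv ℝ u (r • w)‖ := by
        simpa [hg'def, Real.norm_eq_abs] using hb
      nlinarith [abs_nonneg (g' r), sq_abs (g' r)]
    have hr0 : (0:ℝ) < r := hr
    exact mul_le_mul_of_nonneg_left hsqle (pow_nonneg hr0.le _)
  -- measurability
  have hmes1 : Measurable fun x : EuclideanSpace ℝ (Fin n) =>
      ENNReal.ofReal ((u x)^2 / ‖x‖^2) :=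
    ((hucont.measurable.pow_const 2).div ((measurable_norm).pow_const 2)).ennreal_ofReal
  have hmes2 : Measurable fun x : EuclideanSpace ℝ (Fin n) =>
      ENNReal.ofReal (‖fderiv ℝ u x‖^2) :=
    (hfc.measurable.norm.pow_const 2).ennreal_ofReal
  have hpolarL := lintegral_polar (volume : Measure (EuclideanSpace ℝ (Fin n))) _ hmes1
  have hpolarR := lintegral_polar (volume : Measure (EuclideanSpace ℝ (Fin n))) _ hmes2
  rw [hfr] at hpolarL hpolarR
  -- inner integral identifications
  have hinnerL : ∀ ω : sphere (0 : EuclideanSpace ℝ (Fin n)) 1,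
      (∫⁻ r in Ioi (0:ℝ), ENNReal.ofReal (r ^ (n-1)) *
        ENNReal.ofReal ((u (r • (ω : EuclideanSpace ℝ (Fin n))))^2
          / ‖r • (ω : EuclideanSpace ℝ (Fin n))‖^2)) = ENNReal.ofReal (F ω) := by
    intro ω
    rw [hFdef, ofReal_integral_eq_lintegral_ofReal (hint1 ω)
      ((ae_restrict_iff' measurableSet_Ioi).2 (Filter.Eventually.of_forall fun r hr =>
        mul_nonneg (pow_nonneg (le_of_lt hr) _) (sq_nonneg _)))]
    refine setLIntegral_congr_fun measurableSet_Ioi (fun r hr => ?_)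
    have hr0 : (0:ℝ) < r := hr
    rw [← ENNReal.ofReal_mul (pow_nonneg hr0.le _)]
    congr 1
    rw [norm_smul, hω1 ω, mul_one, Real.norm_eq_abs, sq_abs]
    have he : r ^ (n-1) = r ^ (n-3) * r^2 := by
      rw [← pow_add]; congr 1; omega
    rw [he]
    field_simp
  have hinnerR : ∀ ω : sphere (0 : EuclideanSpace ℝ (Fin n)) 1,
      (∫⁻ r in Ioi (0:ℝ), ENNReal.ofReal (r ^ (n-1)) *
        ENNReal.ofReal (‖fderiv ℝ u (r • (ω : EuclideanSpace ℝ (Fin n)))‖^2))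
        = ENNReal.ofReal (H ω) := by
    intro ω
    rw [hHdef, ofReal_integral_eq_lintegral_ofReal (hint2 ω)
      ((ae_restrict_iff' measurableSet_Ioi).2 (Filter.Eventually.of_forall fun r hr =>
        mul_nonneg (pow_nonneg (le_of_lt hr) _) (sq_nonneg _)))]
    refine setLIntegral_congr_fun measurableSet_Ioi (fun r hr => ?_)
    have hr0 : (0:ℝ) < r := hr
    rw [← ENNReal.ofReal_mul (pow_nonneg hr0.le _)]
  -- main lintegral inequality
  have hLle : (∫⁻ x : EuclideanSpace ℝ (Fin n), ENNReal.ofReal ((u x)^2 / ‖x‖^2)) ≤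
      ENNReal.ofReal C * ∫⁻ x : EuclideanSpace ℝ (Fin n), ENNReal.ofReal (‖fderiv ℝ u x‖^2) := by
    rw [hpolarL, hpolarR]
    calc ∫⁻ ω : sphere (0 : EuclideanSpace ℝ (Fin n)) 1,
          (∫⁻ r in Ioi (0:ℝ), ENNReal.ofReal (r ^ (n-1)) *
            ENNReal.ofReal ((u (r • (ω : EuclideanSpace ℝ (Fin n))))^2
              / ‖r • (ω : EuclideanSpace ℝ (Fin n))‖^2)) ∂(volume.toSphere)
        = ∫⁻ ω, ENNReal.ofReal (F ω) ∂(volume.toSphere) := lintegral_congr hinnerL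
      _ ≤ ∫⁻ ω, ENNReal.ofReal (C * H ω) ∂(volume.toSphere) :=
          lintegral_mono fun ω => ENNReal.ofReal_le_ofReal (hray ω)
      _ = ∫⁻ ω, ENNReal.ofReal C * ENNReal.ofReal (H ω) ∂(volume.toSphere) := by
          refine lintegral_congr fun ω => ?_
          rw [ENNReal.ofReal_mul hC0]
      _ = ENNReal.ofReal C * ∫⁻ ω, ENNReal.ofReal (H ω) ∂(volume.toSphere) :=
          lintegral_const_mul' _ _ ENNReal.ofReal_ne_top
      _ = ENNReal.ofReal C * ∫⁻ ω : sphere (0 : EuclideanSpace ℝ (Fin n)) 1,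
            (∫⁻ r in Ioi (0:ℝ), ENNReal.ofReal (r ^ (n-1)) *
              ENNReal.ofReal (‖fderiv ℝ u (r • (ω : EuclideanSpace ℝ (Fin n)))‖^2))
            ∂(volume.toSphere) := by
          rw [lintegral_congr hinnerR]
  -- finiteness of RHS
  have hDint : Integrable (fun x : EuclideanSpace ℝ (Fin n) => ‖fderiv ℝ u x‖^2) :=
    Continuous.integrable_of_hasCompactSupport (hfc.norm.pow 2)
      ((hc.fderiv (𝕜 := ℝ)).comp_left (g := fun L : EuclideanSpace ℝ (Fin n) →L[ℝ] ℝ => ‖L‖^2) (by simp))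
  have hRfin : (∫⁻ x : EuclideanSpace ℝ (Fin n), ENNReal.ofReal (‖fderiv ℝ u x‖^2)) ≠ ⊤ :=
    hDint.lintegral_lt_top.ne
  -- convert Bochner integrals
  have hLHS : ∫ x : EuclideanSpace ℝ (Fin n), (u x)^2 / ‖x‖^2 =
      (∫⁻ x : EuclideanSpace ℝ (Fin n), ENNReal.ofReal ((u x)^2 / ‖x‖^2)).toReal :=
    integral_eq_lintegral_of_nonneg_ae (Filter.Eventually.of_forall fun x => by positivity)
      ((hucont.measurable.pow_const 2).div
        ((measurable_norm).pow_const 2)).aestronglyMeasurable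
  have hRHS : ∫ x : EuclideanSpace ℝ (Fin n), ‖fderiv ℝ u x‖^2 =
      (∫⁻ x : EuclideanSpace ℝ (Fin n), ENNReal.ofReal (‖fderiv ℝ u x‖^2)).toReal :=
    integral_eq_lintegral_of_nonneg_ae (Filter.Eventually.of_forall fun x => by positivity)
      ((hfc.norm.pow 2).aestronglyMeasurable)
  rw [hLHS, hRHS]
  calc (∫⁻ x : EuclideanSpace ℝ (Fin n), ENNReal.ofReal ((u x)^2 / ‖x‖^2)).toReal
      ≤ (ENNReal.ofReal C *
          ∫⁻ x : EuclideanSpace ℝ (Fin n), ENNReal.ofReal (‖fderiv ℝ u x‖^2)).toReal :=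
        ENNReal.toReal_mono (ENNReal.mul_ne_top ENNReal.ofReal_ne_top hRfin) hLle
    _ = C * (∫⁻ x : EuclideanSpace ℝ (Fin n), ENNReal.ofReal (‖fderiv ℝ u x‖^2)).toReal := by
        rw [ENNReal.toReal_mul, ENNReal.toReal_ofReal hC0]
end

section
/- For β > 0, the integral ∫₀^β ds/√(β² − s²) equals π/2, and consequently lim_{β→0⁺} ∫₀^β e^{−sν}/√(2cosh β − 2cosh s) ds = π/2 for any fixed real ν ≥ 0. -/
/-!
The arcsine integral is `arcsin (s / β)` evaluated from `0` to `β`. For the limit, write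
`2 cosh β - 2 cosh s = 4 sinh ((β + s) / 2) sinh ((β - s) / 2)`; since `x ≤ sinh x ≤ x cosh x` for
`x ≥ 0`, this lies between `β ^ 2 - s ^ 2` and `cosh β ^ 2 (β ^ 2 - s ^ 2)` when `|s| ≤ β`.
Comparing with the arcsine integral squeezes the integral between `e^{-βν} / cosh β · π / 2` and
`π / 2`, and both bounds tend to `π / 2` as `β → 0⁺`.
-/

open Real Filter MeasureTheory Set intervalIntegral Topology

namespace Real

theorem sinh_le_mul_cosh {x : ℝ} (hx : 0 ≤ x) : sinh x ≤ x * cosh x := by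
  have hcosh : IntervalIntegrable cosh volume 0 x := continuous_cosh.intervalIntegrable _ _
  have hmono : ∫ t in (0 : ℝ)..x, cosh t ≤ ∫ _ in (0 : ℝ)..x, cosh x :=
    integral_mono_on hx hcosh intervalIntegrable_const fun t ht =>
      cosh_le_cosh.2 <| by rw [abs_of_nonneg ht.1, abs_of_nonneg hx]; exact ht.2
  rwa [integral_eq_sub_of_hasDerivAt (fun t _ => hasDerivAt_sinh t) hcosh,
    intervalIntegral.integral_const, sinh_zero, sub_zero, sub_zero, smul_eq_mul] at hmono

theorem two_cosh_sub_two_cosh (x y : ℝ) :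
    2 * cosh x - 2 * cosh y = 4 * sinh ((x + y) / 2) * sinh ((x - y) / 2) := by
  have h := congrArg₂ (fun a b => 2 * cosh a - 2 * cosh b)
    (show x = (x + y) / 2 + (x - y) / 2 by ring) (show y = (x + y) / 2 - (x - y) / 2 by ring)
  rw [h, cosh_add, cosh_sub]
  ring

theorem sq_sub_sq_le_two_cosh_sub_two_cosh {β s : ℝ} (hs : |s| ≤ β) :
    β ^ 2 - s ^ 2 ≤ 2 * cosh β - 2 * cosh s := by
  obtain ⟨hs₁, hs₂⟩ := abs_le.1 hs
  have hu : 0 ≤ (β + s) / 2 := by linarith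
  have hv : 0 ≤ (β - s) / 2 := by linarith
  calc β ^ 2 - s ^ 2 = 4 * ((β + s) / 2) * ((β - s) / 2) := by ring
    _ ≤ 4 * sinh ((β + s) / 2) * sinh ((β - s) / 2) := by
      gcongr
      · exact self_le_sinh_iff.2 hu
      · exact self_le_sinh_iff.2 hv
    _ = 2 * cosh β - 2 * cosh s := (two_cosh_sub_two_cosh β s).symm

theorem two_cosh_sub_two_cosh_le {β s : ℝ} (hs : |s| ≤ β) :
    2 * cosh β - 2 * cosh s ≤ cosh β ^ 2 * (β ^ 2 - s ^ 2) := by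
  obtain ⟨hs₁, hs₂⟩ := abs_le.1 hs
  have hu : 0 ≤ (β + s) / 2 := by linarith
  have hv : 0 ≤ (β - s) / 2 := by linarith
  have hcosh_le {x : ℝ} (hx : 0 ≤ x) (hxβ : x ≤ β) : cosh x ≤ cosh β :=
    cosh_le_cosh.2 (by rw [abs_of_nonneg hx, abs_of_nonneg (hx.trans hxβ)]; exact hxβ)
  calc 2 * cosh β - 2 * cosh s = 4 * sinh ((β + s) / 2) * sinh ((β - s) / 2) :=
        two_cosh_sub_two_cosh β s
    _ ≤ 4 * ((β + s) / 2 * cosh β) * ((β - s) / 2 * cosh β) := by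
      gcongr
      · exact (sinh_le_mul_cosh hu).trans
          (mul_le_mul_of_nonneg_left (hcosh_le hu (by linarith)) hu)
      · exact (sinh_le_mul_cosh hv).trans
          (mul_le_mul_of_nonneg_left (hcosh_le hv (by linarith)) hv)
    _ = cosh β ^ 2 * (β ^ 2 - s ^ 2) := by ring

end Real

theorem hasDerivAt_arcsin_div {β s : ℝ} (hβ : 0 < β) (hs : |s| < β) :
    HasDerivAt (fun s => arcsin (s / β)) (1 / √(β ^ 2 - s ^ 2)) s := by
  obtain ⟨hs₁, hs₂⟩ := abs_lt.1 hs
  have hlt : s / β < 1 := (div_lt_one hβ).2 hs₂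
  have hgt : -1 < s / β := by rwa [lt_div_iff₀ hβ, neg_one_mul]
  have hsqrt : √(β ^ 2 - s ^ 2) = β * √(1 - (s / β) ^ 2) := by
    rw [← sqrt_sq hβ.le, ← sqrt_mul (sq_nonneg β), sqrt_sq hβ.le]
    congr 1
    field_simp
  refine ((hasDerivAt_arcsin hgt.ne' hlt.ne).comp s
    ((hasDerivAt_id s).div_const β)).congr_deriv ?_
  rw [hsqrt]
  field_simp

theorem intervalIntegrable_one_div_sqrt_sq_sub_sq {β a b : ℝ} (hβ : 0 < β) (ha : -β ≤ a)
    (hab : a ≤ b) (hb : b ≤ β) :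
    IntervalIntegrable (fun s => 1 / √(β ^ 2 - s ^ 2)) volume a b := by
  rw [intervalIntegrable_iff_integrableOn_Ioc_of_le hab]
  refine integrableOn_deriv_of_nonneg (g := fun s => arcsin (s / β))
    (by fun_prop) (fun s hs => hasDerivAt_arcsin_div hβ ?_) (fun s _ => by positivity)
  exact abs_lt.2 ⟨by linarith [hs.1], by linarith [hs.2]⟩

theorem integral_one_div_sqrt_sq_sub_sq {β a b : ℝ} (hβ : 0 < β) (ha : -β ≤ a)
    (hab : a ≤ b) (hb : b ≤ β) :
    ∫ s in a..b, 1 / √(β ^ 2 - s ^ 2) = arcsin (b / β) - arcsin (a / β) :=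
  integral_eq_sub_of_hasDerivAt_of_le hab (by fun_prop)
    (fun s hs => hasDerivAt_arcsin_div hβ (abs_lt.2 ⟨by linarith [hs.1], by linarith [hs.2]⟩))
    (intervalIntegrable_one_div_sqrt_sq_sub_sq hβ ha hab hb)

theorem integral_one_div_sqrt_sq_sub_sq_eq_pi_div_two {β : ℝ} (hβ : 0 < β) :
    ∫ s in (0 : ℝ)..β, 1 / √(β ^ 2 - s ^ 2) = π / 2 := by
  rw [integral_one_div_sqrt_sq_sub_sq hβ (by linarith) hβ.le le_rfl, div_self hβ.ne', zero_div,
    arcsin_one, arcsin_zero, sub_zero]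

noncomputable def diffractiveIntegrand (ν β s : ℝ) : ℝ :=
  exp (-(s * ν)) / √(2 * cosh β - 2 * cosh s)

theorem measurable_diffractiveIntegrand (ν β : ℝ) : Measurable (diffractiveIntegrand ν β) := by
  unfold diffractiveIntegrand
  fun_prop

theorem diffractiveIntegrand_le {ν β s : ℝ} (hν : 0 ≤ ν) (hs₀ : 0 ≤ s) (hsβ : s < β) :
    diffractiveIntegrand ν β s ≤ 1 / √(β ^ 2 - s ^ 2) := by
  have hpos : 0 < β ^ 2 - s ^ 2 := by nlinarith
  have hs : |s| ≤ β := by rw [abs_of_nonneg hs₀]; exact hsβ.le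
  exact div_le_div₀ zero_le_one (exp_le_one_iff.2 (by nlinarith)) (sqrt_pos.2 hpos)
    (sqrt_le_sqrt (sq_sub_sq_le_two_cosh_sub_two_cosh hs))

theorem le_diffractiveIntegrand {ν β s : ℝ} (hν : 0 ≤ ν) (hs : |s| < β) :
    exp (-(β * ν)) / cosh β * (1 / √(β ^ 2 - s ^ 2)) ≤ diffractiveIntegrand ν β s := by
  have hpos : 0 < β ^ 2 - s ^ 2 := by nlinarith [sq_abs s, abs_nonneg s]
  have hsqrt : √(2 * cosh β - 2 * cosh s) ≤ cosh β * √(β ^ 2 - s ^ 2) :=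
    calc √(2 * cosh β - 2 * cosh s) ≤ √(cosh β ^ 2 * (β ^ 2 - s ^ 2)) :=
          sqrt_le_sqrt (two_cosh_sub_two_cosh_le hs.le)
      _ = cosh β * √(β ^ 2 - s ^ 2) := by rw [sqrt_mul (sq_nonneg _), sqrt_sq (cosh_pos β).le]
  rw [div_mul_div_comm, mul_one]
  exact div_le_div₀ (exp_pos _).le
    (exp_le_exp.2 (by nlinarith [(abs_lt.1 hs).2]))
    (sqrt_pos.2 (hpos.trans_le (sq_sub_sq_le_two_cosh_sub_two_cosh hs.le))) hsqrt

theorem intervalIntegrable_diffractiveIntegrand {ν β : ℝ} (hν : 0 ≤ ν) (hβ : 0 < β) :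
    IntervalIntegrable (diffractiveIntegrand ν β) volume 0 β := by
  rw [intervalIntegrable_iff_integrableOn_Ioc_of_le hβ.le, integrableOn_Ioc_iff_integrableOn_Ioo]
  refine ((intervalIntegrable_one_div_sqrt_sq_sub_sq hβ (by linarith) hβ.le le_rfl).1.mono_set
    Ioo_subset_Ioc_self).mono' (measurable_diffractiveIntegrand ν β).aestronglyMeasurable ?_
  refine ae_restrict_of_forall_mem measurableSet_Ioo fun s hs => ?_
  rw [Real.norm_of_nonneg (by unfold diffractiveIntegrand; positivity)]
  exact diffractiveIntegrand_le hν hs.1.le hs.2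

theorem integral_diffractiveIntegrand_le {ν β : ℝ} (hν : 0 ≤ ν) (hβ : 0 < β) :
    ∫ s in (0 : ℝ)..β, diffractiveIntegrand ν β s ≤ π / 2 := by
  rw [← integral_one_div_sqrt_sq_sub_sq_eq_pi_div_two hβ]
  exact integral_mono_on_of_le_Ioo hβ.le (intervalIntegrable_diffractiveIntegrand hν hβ)
    (intervalIntegrable_one_div_sqrt_sq_sub_sq hβ (by linarith) hβ.le le_rfl)
    fun s hs => diffractiveIntegrand_le hν hs.1.le hs.2

theorem le_integral_diffractiveIntegrand {ν β : ℝ} (hν : 0 ≤ ν) (hβ : 0 < β) :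
    exp (-(β * ν)) / cosh β * (π / 2) ≤ ∫ s in (0 : ℝ)..β, diffractiveIntegrand ν β s := by
  rw [← integral_one_div_sqrt_sq_sub_sq_eq_pi_div_two hβ, ← intervalIntegral.integral_const_mul]
  exact integral_mono_on_of_le_Ioo hβ.le
    ((intervalIntegrable_one_div_sqrt_sq_sub_sq hβ (by linarith) hβ.le le_rfl).const_mul _)
    (intervalIntegrable_diffractiveIntegrand hν hβ)
    fun s hs => le_diffractiveIntegrand hν (by rw [abs_of_pos hs.1]; exact hs.2)

theorem tendsto_integral_diffractiveIntegrand {ν : ℝ} (hν : 0 ≤ ν) :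
    Tendsto (fun β => ∫ s in (0 : ℝ)..β, diffractiveIntegrand ν β s) (𝓝[>] 0) (𝓝 (π / 2)) := by
  have hlower : Tendsto (fun β => exp (-(β * ν)) / cosh β * (π / 2)) (𝓝[>] 0) (𝓝 (π / 2)) := by
    have hcont : Continuous fun β => exp (-(β * ν)) / cosh β * (π / 2) := by
      fun_prop (disch := exact fun β => (cosh_pos β).ne')
    simpa using hcont.continuousWithinAt (s := Ioi 0) (x := 0) |>.tendsto
  refine tendsto_of_tendsto_of_tendsto_of_le_of_le' hlower tendsto_const_nhds ?_ ?_ <;>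
    filter_upwards [self_mem_nhdsWithin] with β (hβ : 0 < β)
  exacts [le_integral_diffractiveIntegrand hν hβ, integral_diffractiveIntegrand_le hν hβ]

theorem arcsine_integral_and_diffractive_limit (ν : ℝ) (hν : 0 ≤ ν) :
    (∀ β : ℝ, 0 < β → ∫ s in (0:ℝ)..β, 1 / Real.sqrt (β ^ 2 - s ^ 2) = π / 2) ∧
    Filter.Tendsto
      (fun β : ℝ => ∫ s in (0:ℝ)..β,
        Real.exp (-(s * ν)) / Real.sqrt (2 * Real.cosh β - 2 * Real.cosh s))
      (nhdsWithin 0 (Set.Ioi 0)) (nhds (π / 2)) :=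
  ⟨fun _ => integral_one_div_sqrt_sq_sub_sq_eq_pi_div_two, tendsto_integral_diffractiveIntegrand hν⟩
end
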